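/- (Gauss–Lucas) Every zero of the derivative P' of a nonconstant complex polynomial P lies in the convex hull of the set of zeros of P. -/

import Mathlib

open Polynomial

theorem stmt_6 (P : Polynomial ℂ) (hP : 0 < P.degree) :
    ∀ z : ℂ, P.derivative.eval z = 0 →
      z ∈ convexHull ℝ {w : ℂ | P.eval w = 0} := by
  intro z hz
  have hP₀ : P ≠ 0 := ne_zero_of_degree_gt hP
  have hP' : derivative P ≠ 0 := fun h =>
    (derivative_eq_zero.mp h ▸ natDegree_pos_iff_degree_pos.mpr hP).false
  have hroots : P.rootSet ℂ = {w : ℂ | P.eval w = 0} := by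
    ext w
    simp [mem_rootSet, hP₀]
  rw [← hroots]
  exact rootSet_derivative_subset_convexHull_rootSet hP (by simp [mem_rootSet, hP', hz])
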